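/- arXiv:2002.09883 — 10 statements merged into one kernel-verified Lean document; each statement's English description precedes it below -/
import Mathlib

section
/- Assume the Coxeter graph Γ is connected. Then every G-invariant subspace V of M with V ≠ M is contained in H. In particular, since H ≠ M (as σ_1 does not fix a_1 when char K = 0), H is the unique largest proper G-invariant subspace of M, and H coincides with the subspace of vectors fixed by all of G. -/
/-!
Each σ_i is a pseudo-reflection `v ↦ v - f_i(v) • a_i`, where `f_i` is the linear form with
`f_i(a_k) = C i k`, and `H` is the common kernel of the `f_i`. If an invariant subspace `V`
contains a vector `v` with `f_i(v) ≠ 0`, then `f_i(v) • a_i = v - σ_i v ∈ V`, so `a_i ∈ V`.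
Applied to `v = a_s` this moves membership of basis vectors along the edges of Γ, and
connectedness gives `V = M`. Finally `f_i(a_i) = C i i = 2 ≠ 0`, so `a_i ∉ H`.
-/

theorem SimpleGraph.Preconnected.forall_of_forall_adj {V : Type*} {G : SimpleGraph V}
    (hG : G.Preconnected) {p : V → Prop} (hp : ∀ u v, G.Adj u v → p u → p v)
    {u : V} (hu : p u) (v : V) : p v := by
  have huv := (G.reachable_iff_reflTransGen u v).mp (hG u v)
  induction huv with
  | refl => exact hu
  | tail _ hadj ih => exact hp _ _ hadj ih

theorem Submodule.mem_of_sub_smul_mem {K M : Type*} [DivisionRing K] [AddCommGroup M]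
    [Module K M] {V : Submodule K M} {v x : M} {c : K} (hv : v ∈ V) (h : v - c • x ∈ V)
    (hc : c ≠ 0) : x ∈ V := by
  have hcx : c • x ∈ V := by simpa using V.sub_mem hv h
  exact (V.smul_mem_iff hc).mp hcx

theorem Module.Basis.apply_eq_sub_smul_of_forall_basis {K M ι : Type*} [CommRing K] [AddCommGroup M]
    [Module K M] (a : Module.Basis ι K M) {s : M →ₗ[K] M} (φ : M →ₗ[K] K) (x : M)
    (h : ∀ k, s (a k) = a k - φ (a k) • x) (v : M) : s v = v - φ v • x := by
  have hs : s = LinearMap.id - (LinearMap.toSpanSingleton K M x) ∘ₗ φ :=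
    a.ext fun k => by simp [h]
  simp [hs]

section PseudoReflections

variable {K M ι : Type*} [Field K] [AddCommGroup M] [Module K M]
  {a : Module.Basis ι K M} {C : Matrix ι ι K} {σ : ι → (M ≃ₗ[K] M)}

theorem pseudoReflection_apply (hσ : ∀ i k, σ i (a k) = a k - C i k • a i) (i : ι) (v : M) :
    σ i v = v - a.constr K (C i) v • a i :=
  a.apply_eq_sub_smul_of_forall_basis (s := (σ i).toLinearMap) _ _ (by simpa using hσ i) v

theorem mem_iInf_ker_sub_id_iff (v : M) :
    v ∈ ⨅ i, LinearMap.ker ((σ i).toLinearMap - LinearMap.id) ↔ ∀ i, σ i v = v := by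
  simp [Submodule.mem_iInf, sub_eq_zero]

theorem forall_apply_eq_self_iff_constr_eq_zero (hσ : ∀ i k, σ i (a k) = a k - C i k • a i) (v : M) :
    (∀ i, σ i v = v) ↔ ∀ i, a.constr K (C i) v = 0 := by
  refine forall_congr' fun i => ?_
  rw [pseudoReflection_apply hσ, sub_eq_self, smul_eq_zero]
  simp [a.ne_zero i]

theorem basis_mem_of_constr_ne_zero (hσ : ∀ i k, σ i (a k) = a k - C i k • a i)
    {V : Submodule K M} (hV : ∀ i, ∀ v ∈ V, σ i v ∈ V) {i : ι} {v : M} (hv : v ∈ V)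
    (hi : a.constr K (C i) v ≠ 0) : a i ∈ V :=
  V.mem_of_sub_smul_mem hv (pseudoReflection_apply hσ i v ▸ hV i v hv) hi

theorem eq_top_of_basis_mem (hσ : ∀ i k, σ i (a k) = a k - C i k • a i)
    (hCzero : ∀ i j, C i j = 0 ↔ C j i = 0)
    (hconn : (SimpleGraph.fromRel fun i j : ι => C i j ≠ 0).Preconnected)
    {V : Submodule K M} (hV : ∀ i, ∀ v ∈ V, σ i v ∈ V) {i : ι} (hi : a i ∈ V) : V = ⊤ := by
  have hall : ∀ k, a k ∈ V := by
    refine hconn.forall_of_forall_adj (fun s t hst hs => ?_) hi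
    have hCts : C t s ≠ 0 := by
      rw [SimpleGraph.fromRel_adj] at hst
      rcases hst.2 with h | h
      · exact fun h0 => h ((hCzero t s).mp h0)
      · exact h
    exact basis_mem_of_constr_ne_zero hσ hV hs (by simpa using hCts)
  rw [eq_top_iff, ← a.span_eq, Submodule.span_le]
  rintro _ ⟨k, rfl⟩
  exact hall k

end PseudoReflections

theorem LinearEquiv.forall_mem_closure_range_apply_eq_iff {K M ι : Type*} [Semiring K] [AddCommMonoid M] [Module K M]
    (σ : ι → (M ≃ₗ[K] M)) (v : M) :
    (∀ g ∈ Subgroup.closure (Set.range σ), g v = v) ↔ ∀ i, σ i v = v := by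
  have h := Subgroup.closure_le (K := MulAction.stabilizer (M ≃ₗ[K] M) v) (k := Set.range σ)
  simpa [SetLike.le_def, Set.range_subset_iff, LinearEquiv.smul_def] using h

theorem stmt_0_general
    {K : Type*} [Field K] [CharZero K]
    {M : Type*} [AddCommGroup M] [Module K M]
    {n : ℕ}
    (a : Module.Basis (Fin n) K M)
    (C : Matrix (Fin n) (Fin n) K)
    (hCdiag : ∀ i, C i i = 2)
    (hCzero : ∀ i j, C i j = 0 ↔ C j i = 0)
    (σ : Fin n → (M ≃ₗ[K] M))
    (hσ : ∀ i k, σ i (a k) = a k - C i k • a i)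
    (G : Subgroup (M ≃ₗ[K] M))
    (hG : G = Subgroup.closure (Set.range σ))
    (H : Submodule K M)
    (hH : H = ⨅ i, LinearMap.ker ((σ i).toLinearMap - LinearMap.id))
    (hconn : (SimpleGraph.fromRel (fun i j : Fin n => C i j ≠ 0)).Connected) :
    (∀ V : Submodule K M, (∀ g ∈ G, ∀ v ∈ V, g v ∈ V) → V ≠ ⊤ → V ≤ H) ∧
    H ≠ ⊤ ∧
    (∀ v : M, v ∈ H ↔ ∀ g ∈ G, g v = v) := by
  have hσG : ∀ i, σ i ∈ G := fun i => hG ▸ Subgroup.subset_closure ⟨i, rfl⟩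
  have hH_iff : ∀ v, v ∈ H ↔ ∀ i, a.constr K (C i) v = 0 := fun v => by
    rw [hH, mem_iInf_ker_sub_id_iff, forall_apply_eq_self_iff_constr_eq_zero hσ]
  refine ⟨fun V hV hVtop v hv => ?_, fun hHtop => ?_, fun v => ?_⟩
  · rw [hH_iff]
    by_contra! ⟨i, hi⟩
    have hσV : ∀ i, ∀ v ∈ V, σ i v ∈ V := fun i => hV _ (hσG i)
    exact hVtop (eq_top_of_basis_mem hσ hCzero hconn.preconnected hσV
      (basis_mem_of_constr_ne_zero hσ hσV hv hi))
  · obtain ⟨i⟩ := hconn.nonempty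
    have hai := (hH_iff (a i)).mp (hHtop ▸ Submodule.mem_top) i
    simp [hCdiag] at hai
  · rw [hG, LinearEquiv.forall_mem_closure_range_apply_eq_iff, hH, mem_iInf_ker_sub_id_iff]

/-- If the Coxeter graph Γ is connected, every proper G-invariant
subspace of M is contained in H; moreover H ≠ M and H is exactly the subspace of
vectors fixed by all of G. -/
theorem stmt_0
    {K : Type*} [Field K] [CharZero K]
    {M : Type*} [AddCommGroup M] [Module K M]
    {n : ℕ} (hn : 2 ≤ n)
    (a : Module.Basis (Fin n) K M)
    (C : Matrix (Fin n) (Fin n) K)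
    (hCdiag : ∀ i, C i i = 2)
    (hCzero : ∀ i j, C i j = 0 ↔ C j i = 0)
    (σ : Fin n → (M ≃ₗ[K] M))
    (hσ : ∀ i k, σ i (a k) = a k - C i k • a i)
    (G : Subgroup (M ≃ₗ[K] M))
    (hG : G = Subgroup.closure (Set.range σ))
    (H : Submodule K M)
    (hH : H = ⨅ i, LinearMap.ker ((σ i).toLinearMap - LinearMap.id))
    (hconn : (SimpleGraph.fromRel (fun i j : Fin n => C i j ≠ 0)).Connected) :
    (∀ V : Submodule K M, (∀ g ∈ G, ∀ v ∈ V, g v ∈ V) → V ≠ ⊤ → V ≤ H) ∧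
    H ≠ ⊤ ∧
    (∀ v : M, v ∈ H ↔ ∀ g ∈ G, g v = v) :=
  stmt_0_general a C hCdiag hCzero σ hσ G hG H hH hconn
end

section
/- Assume the Coxeter graph Γ is connected. Then the quotient space M' := M/H, with the induced action of G, is a simple (irreducible) G-module: M' ≠ 0 and the only G-invariant subspaces of M' are 0 and M'. -/
/-!
Each `σ i` is the reflection `y ↦ y - φ i y • a i`, where `φ i` is the linear form with
`φ i (a k) = C i k`, so `H` is the common kernel of the `φ i`. If a `G`-invariant subspace `V` of
`M` contains some `x` with `φ i x ≠ 0`, then `x - σ i x = φ i x • a i` puts `a i` in `V`; as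
`φ j (a i) = C j i`, the same argument passes from `a i` to every neighbour `a j` in `Γ`, so by
connectedness `V` contains the whole basis. Hence every invariant subspace of `M` lies in `H` or
is `M`, which is the simplicity of `M / H`; and `H ≠ M` because `φ i (a i) = 2 ≠ 0`.
-/

open Module Submodule

namespace Module

variable {K M : Type*} [Field K] [AddCommGroup M] [Module K M] {v : M} {f : Dual K M}

lemma ker_preReflection_sub_id (hv : v ≠ 0) :
    LinearMap.ker (preReflection v f - LinearMap.id) = LinearMap.ker f := by
  ext y
  simp [preReflection_apply, hv]

lemma mem_of_preReflection_mem {p : Submodule K M} {y : M} (hy : y ∈ p)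
    (hsy : preReflection v f y ∈ p) (hfy : f y ≠ 0) : v ∈ p := by
  have : f y • v ∈ p := by simpa [preReflection_apply] using p.sub_mem hy hsy
  exact (p.smul_mem_iff hfy).mp this

lemma Basis.eq_preReflection {ι : Type*} (b : Basis ι K M) {g : End K M} {c : ι → K}
    (hg : ∀ k, g (b k) = b k - c k • v) : g = preReflection v (b.constr K c) :=
  b.ext fun k => by rw [hg, preReflection_apply, b.constr_basis]

end Module

lemma SimpleGraph.Reachable.mem_of_adj_closed {V : Type*} {G : SimpleGraph V} {s : Set V}
    (hs : ∀ u w, G.Adj u w → u ∈ s → w ∈ s) {u w : V} (h : G.Reachable u w) (hu : u ∈ s) :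
    w ∈ s := by
  obtain ⟨p⟩ := h
  induction p with
  | nil => exact hu
  | cons huv _ ih => exact ih (hs _ _ huv hu)

namespace Coxeter

variable {ι K M : Type*} [Field K] [AddCommGroup M] [Module K M] (a : Basis ι K M)
  (C : Matrix ι ι K)

noncomputable def simpleReflection (i : ι) : End K M :=
  preReflection (a i) (a.constr K (C i))

theorem le_iInf_ker_or_eq_top_of_invtSubmodule (hC : ∀ i j, C i j = 0 ↔ C j i = 0)
    (hconn : (SimpleGraph.fromRel fun i j => C i j ≠ 0).Preconnected) {V : Submodule K M}
    (hV : ∀ i, V ∈ End.invtSubmodule (simpleReflection a C i)) :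
    V ≤ ⨅ i, LinearMap.ker (a.constr K (C i)) ∨ V = ⊤ := by
  rw [or_iff_not_imp_left, SetLike.not_le_iff_exists]
  rintro ⟨x, hxV, hx⟩
  obtain ⟨i, hi⟩ : ∃ i, a.constr K (C i) x ≠ 0 := by simpa using hx
  have hai : a i ∈ V := mem_of_preReflection_mem hxV (hV i hxV) hi
  have hstep : ∀ j k, (SimpleGraph.fromRel fun i j => C i j ≠ 0).Adj j k →
      a j ∈ V → a k ∈ V := by
    intro j k hjk haj
    refine mem_of_preReflection_mem haj (hV k haj) ?_
    rw [a.constr_basis]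
    rw [SimpleGraph.fromRel_adj] at hjk
    exact hjk.2.elim (fun h => mt (hC k j).mp h) id
  rw [eq_top_iff, ← a.span_eq, span_le, Set.range_subset_iff]
  exact fun j => (hconn i j).mem_of_adj_closed (s := {j | a j ∈ V}) hstep hai

end Coxeter

open Coxeter in
theorem stmt_1_general
    {K : Type*} [Field K] [CharZero K]
    {M : Type*} [AddCommGroup M] [Module K M]
    {n : ℕ}
    (a : Module.Basis (Fin n) K M)
    (C : Matrix (Fin n) (Fin n) K)
    (hCdiag : ∀ i, C i i = 2)
    (hCzero : ∀ i j, C i j = 0 ↔ C j i = 0)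
    (σ : Fin n → (M ≃ₗ[K] M))
    (hσ : ∀ i k, σ i (a k) = a k - C i k • a i)
    (G : Subgroup (M ≃ₗ[K] M))
    (hG : G = Subgroup.closure (Set.range σ))
    (H : Submodule K M)
    (hH : H = ⨅ i, LinearMap.ker ((σ i).toLinearMap - LinearMap.id))
    (hconn : (SimpleGraph.fromRel (fun i j : Fin n => C i j ≠ 0)).Connected) :
    (⊥ : Submodule K (M ⧸ H)) ≠ ⊤ ∧
    (∀ V' : Submodule K (M ⧸ H),
      (∀ g ∈ G, ∀ v : M, H.mkQ v ∈ V' → H.mkQ (g v) ∈ V') →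
      V' = ⊥ ∨ V' = ⊤) := by
  have hσ_eq (i) : (σ i : End K M) = simpleReflection a C i := a.eq_preReflection (hσ i)
  have hH_eq : H = ⨅ i, LinearMap.ker (a.constr K (C i)) := by
    simp only [hH, hσ_eq, simpleReflection, ker_preReflection_sub_id (a.ne_zero _)]
  refine ⟨?_, fun V' hV' => ?_⟩
  · obtain ⟨i⟩ := hconn.nonempty
    have hai : a i ∉ H := by
      rw [hH_eq, mem_iInf, not_forall]
      exact ⟨i, by simp [a.constr_basis, hCdiag]⟩
    have : Nontrivial (M ⧸ H) := Quotient.nontrivial_iff.mpr fun h => hai (h ▸ mem_top)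
    exact bot_ne_top
  · have hV (i) : V'.comap H.mkQ ∈ End.invtSubmodule (simpleReflection a C i) := by
      rw [← hσ_eq]
      exact fun v hv => hV' (σ i) (hG ▸ Subgroup.subset_closure ⟨i, rfl⟩) v hv
    rw [← map_comap_eq_of_surjective H.mkQ_surjective V']
    rcases le_iInf_ker_or_eq_top_of_invtSubmodule a C hCzero hconn.preconnected hV with h | h
    · left
      rw [eq_bot_iff, map_le_iff_le_comap, comap_bot, ker_mkQ]
      exact hH_eq ▸ h
    · right
      rw [h, Submodule.map_top, range_mkQ]

/-- If the Coxeter graph Γ is connected, then M' = M/H with the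
induced G-action is a simple G-module: M' ≠ 0 and the only G-invariant
subspaces of M' are 0 and M'. -/
theorem stmt_1
    {K : Type*} [Field K] [CharZero K]
    {M : Type*} [AddCommGroup M] [Module K M]
    {n : ℕ} (hn : 2 ≤ n)
    (a : Module.Basis (Fin n) K M)
    (C : Matrix (Fin n) (Fin n) K)
    (hCdiag : ∀ i, C i i = 2)
    (hCzero : ∀ i j, C i j = 0 ↔ C j i = 0)
    (σ : Fin n → (M ≃ₗ[K] M))
    (hσ : ∀ i k, σ i (a k) = a k - C i k • a i)
    (G : Subgroup (M ≃ₗ[K] M))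
    (hG : G = Subgroup.closure (Set.range σ))
    (H : Submodule K M)
    (hH : H = ⨅ i, LinearMap.ker ((σ i).toLinearMap - LinearMap.id))
    (hconn : (SimpleGraph.fromRel (fun i j : Fin n => C i j ≠ 0)).Connected) :
    (⊥ : Submodule K (M ⧸ H)) ≠ ⊤ ∧
    (∀ V' : Submodule K (M ⧸ H),
      (∀ g ∈ G, ∀ v : M, H.mkQ v ∈ V' → H.mkQ (g v) ∈ V') →
      V' = ⊥ ∨ V' = ⊤) :=
  stmt_1_general a C hCdiag hCzero σ hσ G hG H hH hconn
end

section
/- Assume the Coxeter graph Γ is connected and H ≠ 0. Then the exact sequence 0 → H → M → M/H → 0 of G-modules does not split: there is no G-invariant subspace W of M with M = H ⊕ W. -/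
/-! If `W` were a `G`-invariant complement of `H`, then for `v = h + w` we would get
`σᵢ v - v = σᵢ w - w ∈ W`. Since `σᵢ aᵢ = -aᵢ`, this puts `-2 • aᵢ`, hence `aᵢ`, into `W`
for every `i`, so `W = M` and `H = 0`. -/

namespace Submodule

theorem apply_sub_self_mem_of_sup_eq_top {R M : Type*} [Ring R] [AddCommGroup M] [Module R M]
    {H W : Submodule R M} (hHW : H ⊔ W = ⊤)
    (f : M →ₗ[R] M) (hfH : ∀ h ∈ H, f h = h) (hfW : ∀ w ∈ W, f w ∈ W) (v : M) :
    f v - v ∈ W := by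
  obtain ⟨h, hh, w, hw, rfl⟩ := mem_sup.mp (hHW ▸ mem_top : v ∈ H ⊔ W)
  have hfv : f (h + w) - (h + w) = f w - w := by rw [map_add, hfH h hh]; abel
  rw [hfv]
  exact sub_mem (hfW w hw) hw

theorem mem_of_apply_eq_smul_of_sup_eq_top {K M : Type*} [DivisionRing K] [AddCommGroup M]
    [Module K M] {H W : Submodule K M} (hHW : H ⊔ W = ⊤)
    (f : M →ₗ[K] M) (hfH : ∀ h ∈ H, f h = h) (hfW : ∀ w ∈ W, f w ∈ W)
    {c : K} (hc : c ≠ 1) {v : M} (hv : f v = c • v) : v ∈ W := by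
  have hmem := apply_sub_self_mem_of_sup_eq_top hHW f hfH hfW v
  have hsub : c • v - v = (c - 1) • v := by rw [sub_smul, one_smul]
  rwa [hv, hsub, smul_mem_iff W (sub_ne_zero.mpr hc)] at hmem

end Submodule

theorem stmt_2_general
    {K : Type*} [Field K] [CharZero K]
    {M : Type*} [AddCommGroup M] [Module K M]
    {n : ℕ}
    (a : Module.Basis (Fin n) K M)
    (C : Matrix (Fin n) (Fin n) K)
    (hCdiag : ∀ i, C i i = 2)
    (σ : Fin n → (M ≃ₗ[K] M))
    (hσ : ∀ i k, σ i (a k) = a k - C i k • a i)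
    (G : Subgroup (M ≃ₗ[K] M))
    (hG : G = Subgroup.closure (Set.range σ))
    (H : Submodule K M)
    (hH : H = ⨅ i, LinearMap.ker ((σ i).toLinearMap - LinearMap.id))
    (hHne : H ≠ ⊥) :
    ¬ ∃ W : Submodule K M, (∀ g ∈ G, ∀ v ∈ W, g v ∈ W) ∧ IsCompl H W := by
  rintro ⟨W, hWinv, hcompl⟩
  have hσH : ∀ i, ∀ h ∈ H, σ i h = h := fun i h hh => by
    have hker := (Submodule.mem_iInf _).mp (hH ▸ hh) i
    simpa [sub_eq_zero] using hker
  have hσW : ∀ i, ∀ w ∈ W, σ i w ∈ W := fun i =>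
    hWinv _ (hG ▸ Subgroup.subset_closure ⟨i, rfl⟩)
  have hσa : ∀ i, σ i (a i) = (-1 : K) • a i := fun i => by
    rw [hσ, hCdiag]; module
  have haW : ∀ i, a i ∈ W := fun i =>
    Submodule.mem_of_apply_eq_smul_of_sup_eq_top hcompl.sup_eq_top (σ i).toLinearMap
      (hσH i) (hσW i) (by norm_num) (hσa i)
  have hWtop : W = ⊤ := by
    rw [eq_top_iff, ← a.span_eq, Submodule.span_le]
    rintro _ ⟨i, rfl⟩
    exact haW i
  exact hHne (by simpa [hWtop] using hcompl.disjoint)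

/-- If the Coxeter graph Γ is connected and H ≠ 0, the exact
sequence 0 → H → M → M/H → 0 of G-modules does not split: no G-invariant
subspace W of M satisfies M = H ⊕ W. -/
theorem stmt_2
    {K : Type*} [Field K] [CharZero K]
    {M : Type*} [AddCommGroup M] [Module K M]
    {n : ℕ} (hn : 2 ≤ n)
    (a : Module.Basis (Fin n) K M)
    (C : Matrix (Fin n) (Fin n) K)
    (hCdiag : ∀ i, C i i = 2)
    (hCzero : ∀ i j, C i j = 0 ↔ C j i = 0)
    (σ : Fin n → (M ≃ₗ[K] M))
    (hσ : ∀ i k, σ i (a k) = a k - C i k • a i)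
    (G : Subgroup (M ≃ₗ[K] M))
    (hG : G = Subgroup.closure (Set.range σ))
    (H : Submodule K M)
    (hH : H = ⨅ i, LinearMap.ker ((σ i).toLinearMap - LinearMap.id))
    (hconn : (SimpleGraph.fromRel (fun i j : Fin n => C i j ≠ 0)).Connected)
    (hHne : H ≠ ⊥) :
    ¬ ∃ W : Submodule K M, (∀ g ∈ G, ∀ v ∈ W, g v ∈ W) ∧ IsCompl H W :=
  stmt_2_general a C hCdiag σ hσ G hG H hH hHne
end

section
/- The fixed subspace H is zero if and only if det C ≠ 0. Consequently, if the Coxeter graph Γ is connected, then G acts irreducibly on M (i.e., the only G-invariant subspaces of M are 0 and M) if and only if det C ≠ 0. -/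
/-!
Put `φ_i(v) := (C · [v]_a)_i`, where `[v]_a` is the coordinate vector of `v`. Then
`σ_i v = v - φ_i(v) a_i`, so `σ_i` fixes `v` iff `φ_i(v) = 0`, and `H` is the kernel of
`v ↦ C · [v]_a`, which vanishes iff `det C ≠ 0`.

Let `V` be a `G`-invariant subspace and `v ∈ V`. Then `v - σ_i v = φ_i(v) a_i ∈ V`. So either no
`a_i` lies in `V`, in which case every `φ_i` vanishes on `V` and `V ⊆ H`; or some `a_i` does.
In the second case `φ_j(a_i) = C j i`, which is nonzero for every neighbour `j` of `i` in `Γ`,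
so `a_j ∈ V` too, and when `Γ` is connected `V` contains the whole basis. Conversely, `H` is
`G`-invariant, and it is proper because `φ_i(a_i) = C i i = 2 ≠ 0`.
-/

open Matrix Module

lemma SimpleGraph.Reachable.of_adj_closed {V : Type*} {G : SimpleGraph V} {p : V → Prop}
    (hp : ∀ u v, G.Adj u v → p u → p v) {u v : V} (huv : G.Reachable u v) (hu : p u) : p v := by
  obtain ⟨w⟩ := huv
  induction w with
  | nil => exact hu
  | cons hadj _ ih => exact ih (hp _ _ hadj hu)

namespace ReflectionRep

variable {K M ι : Type*} [Field K] [AddCommGroup M] [Module K M]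

def commonFixed (σ : ι → M ≃ₗ[K] M) : Submodule K M :=
  ⨅ i, LinearMap.ker ((σ i).toLinearMap - LinearMap.id)

lemma mem_commonFixed_iff {σ : ι → M ≃ₗ[K] M} {v : M} :
    v ∈ commonFixed σ ↔ ∀ i, σ i v = v := by
  simp [commonFixed, sub_eq_zero]

lemma fixed_of_mem_closure {σ : ι → M ≃ₗ[K] M} {g : M ≃ₗ[K] M}
    (hg : g ∈ Subgroup.closure (Set.range σ)) {v : M} (hv : v ∈ commonFixed σ) : g v = v := by
  have : Subgroup.closure (Set.range σ) ≤ MulAction.stabilizer (M ≃ₗ[K] M) v := by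
    rw [Subgroup.closure_le]
    rintro _ ⟨i, rfl⟩
    exact mem_commonFixed_iff.1 hv i
  exact this hg

section CartanForm

variable [Fintype ι] (a : Basis ι K M) (C : Matrix ι ι K)

noncomputable def cartanForm (i : ι) : M →ₗ[K] K :=
  LinearMap.proj i ∘ₗ C.mulVecLin ∘ₗ a.equivFun.toLinearMap

lemma cartanForm_apply (i : ι) (v : M) : cartanForm a C i v = (C *ᵥ a.equivFun v) i := rfl

@[simp]
lemma cartanForm_basis (i k : ι) : cartanForm a C i (a k) = C i k := by
  classical
  simp [cartanForm_apply, Finsupp.single_eq_pi_single]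

variable {a C}

lemma apply_eq_sub_cartanForm_smul {i : ι} {f : M →ₗ[K] M}
    (hf : ∀ k, f (a k) = a k - C i k • a i) (v : M) : f v = v - cartanForm a C i v • a i := by
  have : f = LinearMap.id - (cartanForm a C i).smulRight (a i) :=
    a.ext fun k => by simp [hf]
  simp [this]

lemma apply_eq_self_iff {i : ι} {f : M →ₗ[K] M} (hf : ∀ k, f (a k) = a k - C i k • a i)
    {v : M} : f v = v ↔ cartanForm a C i v = 0 := by
  simp [apply_eq_sub_cartanForm_smul hf, a.ne_zero i]

lemma basis_mem_of_cartanForm_ne_zero {V : Submodule K M} {i : ι} {f : M →ₗ[K] M}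
    (hf : ∀ k, f (a k) = a k - C i k • a i) (hV : ∀ v ∈ V, f v ∈ V) {v : M} (hv : v ∈ V)
    (h : cartanForm a C i v ≠ 0) : a i ∈ V := by
  have : cartanForm a C i v • a i ∈ V := by
    simpa [apply_eq_sub_cartanForm_smul hf] using V.sub_mem hv (hV v hv)
  exact (V.smul_mem_iff h).1 this

end CartanForm

variable [Fintype ι] {a : Basis ι K M} {C : Matrix ι ι K} {σ : ι → M ≃ₗ[K] M}

lemma mem_commonFixed_iff_mulVec (hσ : ∀ i k, σ i (a k) = a k - C i k • a i) {v : M} :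
    v ∈ commonFixed σ ↔ C *ᵥ a.equivFun v = 0 := by
  simp only [mem_commonFixed_iff, funext_iff, Pi.zero_apply, ← cartanForm_apply]
  exact forall_congr' fun i => apply_eq_self_iff (f := (σ i).toLinearMap) (hσ i)

lemma commonFixed_eq_bot_iff [DecidableEq ι] (hσ : ∀ i k, σ i (a k) = a k - C i k • a i) :
    commonFixed σ = ⊥ ↔ C.det ≠ 0 := by
  rw [ne_eq, ← exists_mulVec_eq_zero_iff, a.equivFun.symm.toEquiv.exists_congr_left]
  simp [Submodule.eq_bot_iff, mem_commonFixed_iff_mulVec hσ, not_imp_not]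

lemma commonFixed_ne_top [Nonempty ι] (hσ : ∀ i k, σ i (a k) = a k - C i k • a i)
    (hdiag : ∀ i, C i i ≠ 0) : commonFixed σ ≠ ⊤ := by
  obtain ⟨i⟩ := ‹Nonempty ι›
  intro h
  have hfix : σ i (a i) = a i := mem_commonFixed_iff.1 (h ▸ Submodule.mem_top) i
  exact hdiag i (by simpa using (apply_eq_self_iff (f := (σ i).toLinearMap) (hσ i)).1 hfix)

variable {V : Submodule K M}

lemma le_commonFixed_of_forall_basis_notMem (hσ : ∀ i k, σ i (a k) = a k - C i k • a i)
    (hV : ∀ i, ∀ v ∈ V, σ i v ∈ V) (h : ∀ i, a i ∉ V) : V ≤ commonFixed σ := by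
  refine fun v hv => mem_commonFixed_iff.2 fun i =>
    (apply_eq_self_iff (f := (σ i).toLinearMap) (hσ i)).2 ?_
  by_contra hne
  exact h i (basis_mem_of_cartanForm_ne_zero (f := (σ i).toLinearMap) (hσ i) (hV i) hv hne)

lemma eq_top_of_basis_mem (hC : ∀ i j, C i j = 0 ↔ C j i = 0)
    (hconn : (SimpleGraph.fromRel fun i j => C i j ≠ 0).Connected)
    (hσ : ∀ i k, σ i (a k) = a k - C i k • a i) (hV : ∀ i, ∀ v ∈ V, σ i v ∈ V) {i : ι}
    (hi : a i ∈ V) : V = ⊤ := by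
  have hadj : ∀ j k, (SimpleGraph.fromRel fun i j => C i j ≠ 0).Adj j k →
      a j ∈ V → a k ∈ V := by
    intro j k hjk hj
    have hkj : C k j ≠ 0 := by
      rw [SimpleGraph.fromRel_adj] at hjk
      exact hjk.2.elim (mt (hC j k).2) id
    exact basis_mem_of_cartanForm_ne_zero (f := (σ k).toLinearMap) (hσ k) (hV k) hj
      (by simpa using hkj)
  rw [eq_top_iff, ← a.span_eq, Submodule.span_le]
  rintro _ ⟨j, rfl⟩
  exact (hconn i j).of_adj_closed hadj hi

end ReflectionRep

open ReflectionRep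

theorem stmt_3_general
    {K : Type*} [Field K] [CharZero K]
    {M : Type*} [AddCommGroup M] [Module K M]
    {n : ℕ}
    (a : Module.Basis (Fin n) K M)
    (C : Matrix (Fin n) (Fin n) K)
    (hCdiag : ∀ i, C i i = 2)
    (hCzero : ∀ i j, C i j = 0 ↔ C j i = 0)
    (σ : Fin n → (M ≃ₗ[K] M))
    (hσ : ∀ i k, σ i (a k) = a k - C i k • a i)
    (G : Subgroup (M ≃ₗ[K] M))
    (hG : G = Subgroup.closure (Set.range σ))
    (H : Submodule K M)
    (hH : H = ⨅ i, LinearMap.ker ((σ i).toLinearMap - LinearMap.id)) :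
    (H = ⊥ ↔ C.det ≠ 0) ∧
    ((SimpleGraph.fromRel (fun i j : Fin n => C i j ≠ 0)).Connected →
      ((∀ V : Submodule K M, (∀ g ∈ G, ∀ v ∈ V, g v ∈ V) → V = ⊥ ∨ V = ⊤) ↔
        C.det ≠ 0)) := by
  obtain rfl : H = commonFixed σ := hH
  subst hG
  have hfixed : commonFixed σ = ⊥ ↔ C.det ≠ 0 := commonFixed_eq_bot_iff hσ
  refine ⟨hfixed, fun hconn => ⟨fun hirr hdet => ?_, fun hdet V hV => ?_⟩⟩
  · have : Nonempty (Fin n) := not_isEmpty_iff.1 fun _ => by simp at hdet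
    have hinv : ∀ g ∈ Subgroup.closure (Set.range σ), ∀ v ∈ commonFixed σ,
        g v ∈ commonFixed σ :=
      fun g hg v hv => (fixed_of_mem_closure hg hv).symm ▸ hv
    exact (hirr _ hinv).elim (fun h => hfixed.1 h hdet)
      (commonFixed_ne_top hσ (by simp [hCdiag]))
  · have hVσ : ∀ i, ∀ v ∈ V, σ i v ∈ V := fun i => hV _ (Subgroup.subset_closure ⟨i, rfl⟩)
    by_cases h : ∃ i, a i ∈ V
    · obtain ⟨i, hi⟩ := h
      exact Or.inr (eq_top_of_basis_mem hCzero hconn hσ hVσ hi)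
    · rw [not_exists] at h
      exact Or.inl (eq_bot_iff.2 (hfixed.2 hdet ▸ le_commonFixed_of_forall_basis_notMem hσ hVσ h))

/-- H = 0 iff det C ≠ 0; consequently, if the Coxeter graph Γ is
connected, G acts irreducibly on M iff det C ≠ 0. -/
theorem stmt_3
    {K : Type*} [Field K] [CharZero K]
    {M : Type*} [AddCommGroup M] [Module K M]
    {n : ℕ} (hn : 2 ≤ n)
    (a : Module.Basis (Fin n) K M)
    (C : Matrix (Fin n) (Fin n) K)
    (hCdiag : ∀ i, C i i = 2)
    (hCzero : ∀ i j, C i j = 0 ↔ C j i = 0)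
    (σ : Fin n → (M ≃ₗ[K] M))
    (hσ : ∀ i k, σ i (a k) = a k - C i k • a i)
    (G : Subgroup (M ≃ₗ[K] M))
    (hG : G = Subgroup.closure (Set.range σ))
    (H : Submodule K M)
    (hH : H = ⨅ i, LinearMap.ker ((σ i).toLinearMap - LinearMap.id)) :
    (H = ⊥ ↔ C.det ≠ 0) ∧
    ((SimpleGraph.fromRel (fun i j : Fin n => C i j ≠ 0)).Connected →
      ((∀ V : Submodule K M, (∀ g ∈ G, ∀ v ∈ V, g v ∈ V) → V = ⊥ ∨ V = ⊤) ↔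
        C.det ≠ 0)) :=
  stmt_3_general a C hCdiag hCzero σ hσ G hG H hH
end

section
/- Assume the Coxeter graph Γ is connected. Then N(G) is a normal subgroup of G, and the quotient map π : G → G/N(G) preserves the orders of the products of two generators: for all i, j, if σ_i σ_j has finite order m, then π(σ_i σ_j) also has order m in G/N(G). -/
/-!
Each `σ i` is the reflection `v ↦ v - φ i v • a i`, where `φ i (a k) = C i k`. The group `G`
fixes `H` pointwise, so the automorphisms acting trivially on `M ⧸ H` form a subgroup normalised
by `G`, and `N` is its trace on `G`.

For `i ≠ j`, the product `σ i * σ j` acts trivially on `M ⧸ span {a i, a j}`. If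
`C i j * C j i = 4` it is a shear of infinite order; otherwise `span {a i, a j}` meets
`ker (φ i) ⊓ ker (φ j) ⊇ H` only in `0`. So a power of `σ i * σ j` lying in `N` acts
trivially modulo two subspaces meeting only in `0`, hence is the identity: `π` is injective on
the cyclic group generated by `σ i * σ j`.
-/

namespace LinearEquiv

variable {R M : Type*} [Ring R] [AddCommGroup M] [Module R M]

def fixingQuotient (P : Submodule R M) : Subgroup (M ≃ₗ[R] M) where
  carrier := {e | ∀ v, e v - v ∈ P}
  one_mem' := by simp
  mul_mem' {e₁ e₂} h₁ h₂ v := by simpa using P.add_mem (h₁ (e₂ v)) (h₂ v)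
  inv_mem' {e} h v := by simpa using P.neg_mem (h (e⁻¹ v))

variable {P Q : Submodule R M} {e : M ≃ₗ[R] M}

theorem fixingQuotient_mono (hPQ : P ≤ Q) : fixingQuotient P ≤ fixingQuotient Q :=
  fun _ he v ↦ hPQ (he v)

theorem eq_one_of_mem_fixingQuotient_of_disjoint (hPQ : Disjoint P Q)
    (hP : e ∈ fixingQuotient P) (hQ : e ∈ fixingQuotient Q) : e = 1 :=
  ext fun v ↦ sub_eq_zero.mp (Submodule.disjoint_def.mp hPQ _ (hP v) (hQ v))

theorem conj_mem_fixingQuotient {g : M ≃ₗ[R] M} (hg : ∀ v ∈ P, g v = v)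
    (he : e ∈ fixingQuotient P) : g * e * g⁻¹ ∈ fixingQuotient P := fun v ↦ by
  have hconj : (g * e * g⁻¹) v - v = g (e (g⁻¹ v) - g⁻¹ v) := by simp [map_sub]
  rw [hconj, hg _ (he _)]
  exact he _

theorem apply_eq_self_of_mem_closure {S : Set (M ≃ₗ[R] M)} {g : M ≃ₗ[R] M}
    (hg : g ∈ Subgroup.closure S) {v : M} (hv : ∀ s ∈ S, s v = v) : g v = v :=
  (Subgroup.closure_le (MulAction.stabilizer (M ≃ₗ[R] M) v)).mpr hv hg

end LinearEquiv

namespace Module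

section CommRing

variable {R M : Type*} [CommRing R] [AddCommGroup M] [Module R M] {x y : M} {f g : Dual R M}

theorem reflection_mem_fixingQuotient (hfx : f x = 2) :
    reflection hfx ∈ LinearEquiv.fixingQuotient (R ∙ x) := fun v ↦ by
  simpa [reflection_apply] using Submodule.smul_mem _ (-f v) (Submodule.mem_span_singleton_self x)

theorem reflection_mul_reflection_mem_fixingQuotient (hfx : f x = 2) (hgy : g y = 2) :
    reflection hfx * reflection hgy ∈ LinearEquiv.fixingQuotient (Submodule.span R {x, y}) :=
  mul_mem
    (LinearEquiv.fixingQuotient_mono (Submodule.span_mono (by simp))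
      (reflection_mem_fixingQuotient hfx))
    (LinearEquiv.fixingQuotient_mono (Submodule.span_mono (by simp))
      (reflection_mem_fixingQuotient hgy))

theorem not_isOfFinOrder_reflection_mul_reflection [CharZero R] (hfx : f x = 2) (hgy : g y = 2)
    (hfygx : f y * g x = 4) (hxy : LinearIndependent R ![x, y]) :
    ¬IsOfFinOrder (reflection hfx * reflection hgy) := by
  rw [isOfFinOrder_iff_pow_eq_one]
  rintro ⟨m, hm, hpow⟩
  have hshear := reflection_reflection_iterate hfx hgy hfygx m
  rw [← LinearEquiv.coe_pow, ← LinearEquiv.mul_eq_trans, hpow, LinearEquiv.coe_one, id_eq,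
    left_eq_add] at hshear
  have hcomb : (m * f y) • x + (-(2 * m : R)) • y = 0 := by
    rw [← hshear, ← Nat.cast_smul_eq_nsmul R]
    module
  have h2m : (2 * m : R) ≠ 0 := by exact_mod_cast (by omega : 2 * m ≠ 0)
  exact h2m (neg_eq_zero.mp (LinearIndependent.pair_iff.mp hxy _ _ hcomb).2)

theorem disjoint_span_pair_ker_inf_ker [NoZeroDivisors R] (hfx : f x = 2) (hgy : g y = 2)
    (hfygx : f y * g x ≠ 4) :
    Disjoint (Submodule.span R {x, y}) (LinearMap.ker f ⊓ LinearMap.ker g) := by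
  refine Submodule.disjoint_def.mpr fun v hv hker ↦ ?_
  obtain ⟨α, β, rfl⟩ := Submodule.mem_span_pair.mp hv
  obtain ⟨hf, hg⟩ : f (α • x + β • y) = 0 ∧ g (α • x + β • y) = 0 := by simpa using hker
  simp only [map_add, map_smul, smul_eq_mul, hfx, hgy] at hf hg
  have h4 : 4 - f y * g x ≠ 0 := sub_ne_zero.mpr hfygx.symm
  have hα : α = 0 := (mul_eq_zero.mp (by linear_combination 2 * hf - f y * hg :
    (4 - f y * g x) * α = 0)).resolve_left h4
  have hβ : β = 0 := (mul_eq_zero.mp (by linear_combination 2 * hg - g x * hf :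
    (4 - f y * g x) * β = 0)).resolve_left h4
  simp [hα, hβ]

theorem reflection_mul_reflection_pow_eq_one_of_mem_fixingQuotient [NoZeroDivisors R] [CharZero R]
    (hfx : f x = 2) (hgy : g y = 2) (hxy : LinearIndependent R ![x, y])
    (hfin : IsOfFinOrder (reflection hfx * reflection hgy)) {Q : Submodule R M}
    (hQ : Q ≤ LinearMap.ker f ⊓ LinearMap.ker g) {k : ℕ}
    (hk : (reflection hfx * reflection hgy) ^ k ∈ LinearEquiv.fixingQuotient Q) :
    (reflection hfx * reflection hgy) ^ k = 1 := by
  have hfygx : f y * g x ≠ 4 := fun h ↦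
    not_isOfFinOrder_reflection_mul_reflection hfx hgy h hxy hfin
  exact LinearEquiv.eq_one_of_mem_fixingQuotient_of_disjoint
    ((disjoint_span_pair_ker_inf_ker hfx hgy hfygx).mono_right hQ)
    (pow_mem (reflection_mul_reflection_mem_fixingQuotient hfx hgy) k) hk

end CommRing

section Basis

variable {ι K M : Type*} [Field K] [AddCommGroup M] [Module K M] (a : Basis ι K M)
  {C : Matrix ι ι K}

theorem Basis.constr_apply_self_eq_two (hCdiag : ∀ i, C i i = 2) (i : ι) :
    a.constr K (C i) (a i) = 2 :=
  (a.constr_basis K _ i).trans (hCdiag i)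

theorem Basis.eq_reflection_constr (hCdiag : ∀ i, C i i = 2) {σ : ι → M ≃ₗ[K] M}
    (hσ : ∀ i k, σ i (a k) = a k - C i k • a i) (i : ι) :
    σ i = reflection (a.constr_apply_self_eq_two hCdiag i) :=
  a.ext' fun k ↦ by rw [hσ, reflection_apply, a.constr_basis]

theorem Basis.iInf_ker_reflection_sub_id_le_ker_constr (hCdiag : ∀ i, C i i = 2) (i : ι) :
    ⨅ j, LinearMap.ker ((reflection (a.constr_apply_self_eq_two hCdiag j)).toLinearMap -
      LinearMap.id) ≤ LinearMap.ker (a.constr K (C i)) := fun v hv ↦ by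
  have hfix := (Submodule.mem_iInf _).mp hv i
  simpa [reflection_apply, sub_eq_zero, a.ne_zero i] using hfix

end Basis

end Module

theorem QuotientGroup.orderOf_mk_eq_orderOf {G : Type*} [Group G] {N : Subgroup G} [N.Normal]
    {x : G} (h : ∀ k : ℕ, x ^ k ∈ N → x ^ k = 1) : orderOf (x : G ⧸ N) = orderOf x :=
  orderOf_eq_orderOf_iff.mpr fun k ↦ by
    rw [← QuotientGroup.mk_pow, QuotientGroup.eq_one_iff]
    exact ⟨h k, fun h1 ↦ h1 ▸ one_mem N⟩

theorem stmt_4_general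
    {K : Type*} [Field K] [CharZero K]
    {M : Type*} [AddCommGroup M] [Module K M]
    {n : ℕ}
    (a : Module.Basis (Fin n) K M)
    (C : Matrix (Fin n) (Fin n) K)
    (hCdiag : ∀ i, C i i = 2)
    (σ : Fin n → (M ≃ₗ[K] M))
    (hσ : ∀ i k, σ i (a k) = a k - C i k • a i)
    (G : Subgroup (M ≃ₗ[K] M))
    (hG : G = Subgroup.closure (Set.range σ))
    (H : Submodule K M)
    (hH : H = ⨅ i, LinearMap.ker ((σ i).toLinearMap - LinearMap.id))
    (N : Subgroup G)
    (hN : ∀ g : G, g ∈ N ↔ ∀ v : M, (g : M ≃ₗ[K] M) v - v ∈ H) :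
    N.Normal ∧
    (∀ [inst : N.Normal], ∀ i j : Fin n, ∀ x : G,
      (x : M ≃ₗ[K] M) = σ i * σ j →
      ∀ m : ℕ, 0 < m → orderOf x = m →
      orderOf (QuotientGroup.mk x : G ⧸ N) = m) := by
  have hσ_eq := a.eq_reflection_constr hCdiag hσ
  have hfix : ∀ v ∈ H, ∀ i, σ i v = v := fun v hv i ↦ by
    rw [hH] at hv
    simpa [sub_eq_zero] using (Submodule.mem_iInf _).mp hv i
  have hGH : ∀ g ∈ G, ∀ v ∈ H, g v = v := fun g hg v hv ↦
    LinearEquiv.apply_eq_self_of_mem_closure (hG ▸ hg) (by rintro _ ⟨i, rfl⟩; exact hfix v hv i)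
  refine ⟨⟨fun g hg h ↦ (hN _).mpr
    (LinearEquiv.conj_mem_fixingQuotient (hGH h h.2) ((hN g).mp hg))⟩, ?_⟩
  intro _ i j x hx m hm hxm
  have hxk (k : ℕ) : ((x ^ k : G) : M ≃ₗ[K] M) = (σ i * σ j) ^ k := by rw [Subgroup.coe_pow, hx]
  rw [← hxm]
  refine QuotientGroup.orderOf_mk_eq_orderOf fun k hk ↦ Subtype.ext ?_
  have hkH := (hN _).mp hk
  rw [hxk] at hkH
  rw [hxk, Subgroup.coe_one]
  obtain rfl | hij := eq_or_ne i j
  · rw [hσ_eq, mul_eq_one_iff_eq_inv.mpr (Module.reflection_inv _).symm, one_pow]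
  have hfin : IsOfFinOrder (σ i * σ j) :=
    orderOf_pos_iff.mp (by rw [← hx, Subgroup.orderOf_coe, hxm]; exact hm)
  have hHker (l : Fin n) : H ≤ LinearMap.ker (a.constr K (C l)) := by
    rw [hH, funext hσ_eq]
    exact a.iInf_ker_reflection_sub_id_le_ker_constr hCdiag l
  rw [hσ_eq, hσ_eq] at hfin hkH ⊢
  exact Module.reflection_mul_reflection_pow_eq_one_of_mem_fixingQuotient _ _
    (LinearIndependent.pair_iff.mpr ((LinearIndepOn.pair_iff a hij).mp
      (a.linearIndependent.linearIndepOn _)))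
    hfin (le_inf (hHker i) (hHker j)) hkH

/-- If the Coxeter graph Γ is connected, N(G) is a normal subgroup
of G and the projection π : G → G/N(G) preserves the (finite) orders of products
of two generators σ_i σ_j. -/
theorem stmt_4
    {K : Type*} [Field K] [CharZero K]
    {M : Type*} [AddCommGroup M] [Module K M]
    {n : ℕ} (hn : 2 ≤ n)
    (a : Module.Basis (Fin n) K M)
    (C : Matrix (Fin n) (Fin n) K)
    (hCdiag : ∀ i, C i i = 2)
    (hCzero : ∀ i j, C i j = 0 ↔ C j i = 0)
    (σ : Fin n → (M ≃ₗ[K] M))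
    (hσ : ∀ i k, σ i (a k) = a k - C i k • a i)
    (G : Subgroup (M ≃ₗ[K] M))
    (hG : G = Subgroup.closure (Set.range σ))
    (H : Submodule K M)
    (hH : H = ⨅ i, LinearMap.ker ((σ i).toLinearMap - LinearMap.id))
    (hconn : (SimpleGraph.fromRel (fun i j : Fin n => C i j ≠ 0)).Connected)
    (N : Subgroup G)
    (hN : ∀ g : G, g ∈ N ↔ ∀ v : M, (g : M ≃ₗ[K] M) v - v ∈ H) :
    N.Normal ∧
    (∀ [inst : N.Normal], ∀ i j : Fin n, ∀ x : G,
      (x : M ≃ₗ[K] M) = σ i * σ j →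
      ∀ m : ℕ, 0 < m → orderOf x = m →
      orderOf (QuotientGroup.mk x : G ⧸ N) = m) :=
  stmt_4_general a C hCdiag σ hσ G hG H hH N hN
end

section
/- Let K be a field and let C be an (n₀+n₁) × (n₀+n₁) matrix over K written in block form C = [[C₀₀, C₀₁],[C₁₀, C₁₁]] with C₀₀ of size n₀ × n₀ and C₁₁ of size n₁ × n₁ invertible. Then the kernel of C has dimension exactly n₀ if and only if C₀₁ C₁₁⁻¹ C₁₀ = C₀₀. -/
/-!
By the Schur-complement factorisation, `C` is the product of two unitriangular block matrices
and the block-diagonal matrix `diag(S, C₁₁)`, where `S = C₀₀ - C₀₁ C₁₁⁻¹ C₁₀`. Hence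
`ker C ≅ ker S`, and `ker S` has dimension `n₀` exactly when `S = 0`.
-/

open Matrix

namespace Matrix

variable {K : Type*} [Field K] {l m n : Type*}

section

variable [Fintype n]

theorem finrank_ker_mulVecLin_add_rank (A : Matrix m n K) :
    Module.finrank K (LinearMap.ker A.mulVecLin) + A.rank = Fintype.card n := by
  rw [rank, add_comm, LinearMap.finrank_range_add_finrank_ker, Module.finrank_fintype_fun_eq_card]

theorem rank_eq_zero_iff {A : Matrix m n K} : A.rank = 0 ↔ A = 0 := by
  rw [rank, Submodule.finrank_eq_zero, LinearMap.range_eq_bot, ← mulVecLin_zero]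
  exact ⟨fun h ↦ mulVec_injective (congrArg DFunLike.coe h), congrArg mulVecLin⟩

theorem finrank_ker_mulVecLin_eq_card_iff {A : Matrix m n K} :
    Module.finrank K (LinearMap.ker A.mulVecLin) = Fintype.card n ↔ A = 0 := by
  rw [← rank_eq_zero_iff, ← finrank_ker_mulVecLin_add_rank A]
  omega

end

variable [Fintype m] [Fintype n]

theorem ker_mulVecLin_mul_of_isUnit_det [DecidableEq m] {A : Matrix m m K} (hA : IsUnit A.det)
    (B : Matrix m n K) :
    LinearMap.ker (A * B).mulVecLin = LinearMap.ker B.mulVecLin := by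
  rw [mulVecLin_mul, LinearMap.ker_comp_of_ker_eq_bot]
  exact LinearMap.ker_eq_bot.mpr (mulVec_injective_of_isUnit ((isUnit_iff_isUnit_det A).mpr hA))

theorem finrank_ker_mulVecLin_mul_of_isUnit_det [DecidableEq m] (A : Matrix l m K)
    {B : Matrix m m K} (hB : IsUnit B.det) :
    Module.finrank K (LinearMap.ker (A * B).mulVecLin) =
      Module.finrank K (LinearMap.ker A.mulVecLin) := by
  have h := finrank_ker_mulVecLin_add_rank (A * B)
  rw [rank_mul_eq_left_of_isUnit_det B A hB, ← finrank_ker_mulVecLin_add_rank A] at h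
  omega

theorem ker_mulVecLin_fromBlocks_zero_zero_of_isUnit_det [DecidableEq n] (A : Matrix l m K)
    {D : Matrix n n K} (hD : IsUnit D.det) :
    LinearMap.ker (fromBlocks A 0 0 D).mulVecLin =
      (LinearMap.ker A.mulVecLin).map
        ((LinearEquiv.sumArrowLequivProdArrow m n K K).symm.toLinearMap ∘ₗ LinearMap.inl K _ _) := by
  have hD_inj := mulVec_injective_of_isUnit ((isUnit_iff_isUnit_det D).mpr hD)
  ext x
  simp only [LinearMap.mem_ker, mulVecLin_apply, fromBlocks_mulVec, Submodule.mem_map,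
    ← Sum.elim_zero_zero, Sum.elim_eq_iff, zero_mulVec, add_zero, zero_add]
  constructor
  · rintro ⟨hA, hD⟩
    have hx : x ∘ Sum.inr = 0 := hD_inj (by rw [hD, mulVec_zero])
    refine ⟨x ∘ Sum.inl, hA, ?_⟩
    ext (i | i)
    · rfl
    · exact (congrFun hx i).symm
  · rintro ⟨y, hy, rfl⟩
    exact ⟨hy, mulVec_zero D⟩

theorem finrank_ker_mulVecLin_fromBlocks_zero_zero_of_isUnit_det [DecidableEq n]
    (A : Matrix l m K) {D : Matrix n n K} (hD : IsUnit D.det) :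
    Module.finrank K (LinearMap.ker (fromBlocks A 0 0 D).mulVecLin) =
      Module.finrank K (LinearMap.ker A.mulVecLin) := by
  rw [ker_mulVecLin_fromBlocks_zero_zero_of_isUnit_det A hD]
  exact (Submodule.equivMapOfInjective
    (f := (LinearEquiv.sumArrowLequivProdArrow m n K K).symm.toLinearMap ∘ₗ LinearMap.inl K _ _)
    ((LinearEquiv.symm _).injective.comp LinearMap.inl_injective) _).symm.finrank_eq

theorem finrank_ker_mulVecLin_fromBlocks_of_isUnit_det₂₂ [Fintype l] [DecidableEq l]
    [DecidableEq m] [DecidableEq n] (A : Matrix l m K) (B : Matrix l n K) (C : Matrix n m K)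
    {D : Matrix n n K} (hD : IsUnit D.det) :
    Module.finrank K (LinearMap.ker (fromBlocks A B C D).mulVecLin) =
      Module.finrank K (LinearMap.ker (A - B * D⁻¹ * C).mulVecLin) := by
  let := D.invertibleOfIsUnitDet hD
  rw [fromBlocks_eq_of_invertible₂₂, Matrix.mul_assoc,
    ker_mulVecLin_mul_of_isUnit_det (by simp),
    finrank_ker_mulVecLin_mul_of_isUnit_det _ (by simp),
    finrank_ker_mulVecLin_fromBlocks_zero_zero_of_isUnit_det _ hD, invOf_eq_nonsing_inv]

end Matrix

/-- For a block matrix C = [[C₀₀, C₀₁],[C₁₀, C₁₁]] with C₁₁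
invertible, dim ker C = n₀ iff C₀₁ C₁₁⁻¹ C₁₀ = C₀₀. -/
theorem stmt_7
    {K : Type*} [Field K] {n₀ n₁ : ℕ}
    (C₀₀ : Matrix (Fin n₀) (Fin n₀) K) (C₀₁ : Matrix (Fin n₀) (Fin n₁) K)
    (C₁₀ : Matrix (Fin n₁) (Fin n₀) K) (C₁₁ : Matrix (Fin n₁) (Fin n₁) K)
    (hC₁₁ : IsUnit C₁₁.det) :
    Module.finrank K
      (LinearMap.ker (Matrix.fromBlocks C₀₀ C₀₁ C₁₀ C₁₁).mulVecLin) = n₀ ↔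
    C₀₁ * C₁₁⁻¹ * C₁₀ = C₀₀ := by
  rw [finrank_ker_mulVecLin_fromBlocks_of_isUnit_det₂₂ _ _ _ hC₁₁, eq_comm (b := C₀₀),
    ← sub_eq_zero (a := C₀₀), ← finrank_ker_mulVecLin_eq_card_iff, Fintype.card_fin]
end

section
/- Let K be a field, V a K-vector space, H a subspace of V, and G a subgroup of GL(V) all of whose elements map H into H. Assume the center of G is trivial, and that there exist z ∈ G with z ≠ 1 and a scalar λ ∈ K such that z v − λ v ∈ H for all v ∈ V (z acts as the scalar λ on V/H). Then there exists g ∈ G with g ≠ 1 acting trivially on V/H, i.e., g v − v ∈ H for all v ∈ V. -/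
/-!
Since `G` stabilizes `H`, it acts on `V ⧸ H` through a monoid homomorphism
`φ : G →* End (V ⧸ H)`, and `φ z` is the central scalar `λ • 1`. As `z` is not central in `G`,
some `g ∈ G` does not commute with `z`; the commutator `⁅z, g⁆` is then nontrivial, while
`φ ⁅z, g⁆ = 1` because `φ z` commutes with `φ g`.
-/

open scoped commutatorElement

theorem MonoidHom.map_commutatorElement_eq_one_of_commute {G M : Type*} [Group G] [Monoid M]
    (f : G →* M) {a b : G} (h : Commute (f a) (f b)) : f ⁅a, b⁆ = 1 := by
  rw [commutatorElement_def, map_mul, map_mul, map_mul, h.eq, mul_assoc (f b), ← map_mul,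
    mul_inv_cancel, map_one, mul_one, ← map_mul, mul_inv_cancel, map_one]

namespace Submodule

section Ring

variable {R V : Type*} [Ring R] [AddCommGroup V] [Module R V]

def quotientRepresentation (H : Submodule R V) (G : Subgroup (V ≃ₗ[R] V))
    (hG : ∀ g ∈ G, ∀ x ∈ H, g x ∈ H) : G →* Module.End R (V ⧸ H) where
  toFun g := H.mapQ H (g : V ≃ₗ[R] V).toLinearMap fun x hx => hG g g.2 x hx
  map_one' := by ext; simp
  map_mul' _ _ := by ext; simp

variable {H : Submodule R V} {G : Subgroup (V ≃ₗ[R] V)} {hG : ∀ g ∈ G, ∀ x ∈ H, g x ∈ H}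

theorem quotientRepresentation_apply_mk (g : G) (v : V) :
    H.quotientRepresentation G hG g (Quotient.mk v) = Quotient.mk ((g : V ≃ₗ[R] V) v) :=
  rfl

theorem quotientRepresentation_eq_one_iff {g : G} :
    H.quotientRepresentation G hG g = 1 ↔ ∀ v, (g : V ≃ₗ[R] V) v - v ∈ H := by
  simp only [LinearMap.ext_iff, Quotient.forall, quotientRepresentation_apply_mk,
    Module.End.one_apply, Quotient.eq]

end Ring

section CommRing

variable {R V : Type*} [CommRing R] [AddCommGroup V] [Module R V]
  {H : Submodule R V} {G : Subgroup (V ≃ₗ[R] V)} {hG : ∀ g ∈ G, ∀ x ∈ H, g x ∈ H}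

theorem quotientRepresentation_eq_smul_one {g : G} {c : R}
    (hg : ∀ v, (g : V ≃ₗ[R] V) v - c • v ∈ H) : H.quotientRepresentation G hG g = c • 1 := by
  ext v
  simpa only [LinearMap.comp_apply, mkQ_apply, quotientRepresentation_apply_mk,
    LinearMap.smul_apply, Module.End.one_apply, ← Quotient.mk_smul, Quotient.eq] using hg v

end CommRing

end Submodule

/-- If G ≤ GL(V) stabilizes H, has trivial center, and contains a
nontrivial element z acting as a scalar λ on V/H, then G contains a nontrivial
element acting trivially on V/H. -/
theorem stmt_9
    {K : Type*} [Field K]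
    {V : Type*} [AddCommGroup V] [Module K V]
    (H : Submodule K V)
    (G : Subgroup (V ≃ₗ[K] V))
    (hstab : ∀ g ∈ G, ∀ x ∈ H, g x ∈ H)
    (hcenter : ∀ g ∈ G, (∀ g' ∈ G, g * g' = g' * g) → g = 1)
    (z : V ≃ₗ[K] V) (hzG : z ∈ G) (hz1 : z ≠ 1)
    (lam : K) (hz : ∀ v : V, z v - lam • v ∈ H) :
    ∃ g ∈ G, g ≠ 1 ∧ ∀ v : V, g v - v ∈ H := by
  obtain ⟨g, hgG, hzg⟩ : ∃ g ∈ G, z * g ≠ g * z := by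
    by_contra! h
    exact hz1 (hcenter z hzG h)
  set c : G := ⁅(⟨z, hzG⟩ : G), ⟨g, hgG⟩⁆
  have hc : (c : V ≃ₗ[K] V) = ⁅z, g⁆ := rfl
  refine ⟨c, c.2, ?_, ?_⟩
  · rwa [hc, Ne, commutatorElement_eq_one_iff_mul_comm]
  · rw [← Submodule.quotientRepresentation_eq_one_iff (hG := hstab)]
    refine MonoidHom.map_commutatorElement_eq_one_of_commute _ ?_
    rw [Submodule.quotientRepresentation_eq_smul_one hz]
    exact (Commute.one_left _).smul_left lam
end

section
/- Let K be a field of characteristic 0 and α₁, α₂, α₄, l, m ∈ K with α₃ := lm. Consider the matrix C(III) = [[2, −α₁, −α₂, −α₄], [−1, 2, −l, 0], [−1, −m, 2, 0], [−1, 0, 0, 2]] and assume det C(III) = 0, α₄ ≠ 0, and α₃ ≠ 4. Then the leading 3 × 3 principal minor det [[2, −α₁, −α₂], [−1, 2, −l], [−1, −m, 2]] equals (1/2)·α₄·(4 − α₃), which is nonzero; consequently the kernel of C(III) is one-dimensional, spanned by the vector (1, (l+2)/(4−α₃), (m+2)/(4−α₃), 1/2). -/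
/-!
Expanding `det C(III)` along its last row `(-1, 0, 0, 2)` gives `det C(III) = 2 M - α₄ (4 - lm)`,
with `M` the leading `3 × 3` minor; this is the value of `M`. When `lm ≠ 4`, the last three rows
of `C(III)` determine `x₁, x₂, x₃` from `x₀`, so the kernel lies in the line spanned by the given
vector; it is nonzero because `det C(III) = 0`, hence it is that line.
-/

theorem Submodule.eq_span_singleton_of_le_of_ne_bot {K V : Type*} [Field K] [AddCommGroup V]
    [Module K V] {p : Submodule K V} {v : V} (hle : p ≤ K ∙ v) (hp : p ≠ ⊥) : p = K ∙ v := by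
  refine le_antisymm hle ?_
  obtain ⟨x, hx, hx0⟩ := p.ne_bot_iff.mp hp
  obtain ⟨c, rfl⟩ := Submodule.mem_span_singleton.mp (hle hx)
  have hc : c ≠ 0 := by rintro rfl; simp at hx0
  rw [Submodule.span_singleton_le_iff_mem, ← inv_smul_smul₀ hc v]
  exact p.smul_mem _ hx

theorem Matrix.ker_mulVecLin_ne_bot_of_det_eq_zero {n K : Type*} [Fintype n] [DecidableEq n]
    [Field K] {A : Matrix n n K} (hA : A.det = 0) : LinearMap.ker A.mulVecLin ≠ ⊥ := by
  obtain ⟨v, hv, hAv⟩ := Matrix.exists_mulVec_eq_zero_iff.mpr hA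
  exact (Submodule.ne_bot_iff _).mpr ⟨v, hAv, hv⟩

section CIII

variable {K : Type*} [Field K] (α₁ α₂ α₄ l m : K)

def matrixCIII : Matrix (Fin 4) (Fin 4) K :=
  !![2, -α₁, -α₂, -α₄; -1, 2, -l, 0; -1, -m, 2, 0; -1, 0, 0, 2]

def leadingMinorCIII : Matrix (Fin 3) (Fin 3) K :=
  !![2, -α₁, -α₂; -1, 2, -l; -1, -m, 2]

def kernelVectorCIII : Fin 4 → K :=
  ![1, (l + 2) / (4 - l * m), (m + 2) / (4 - l * m), 1 / 2]

theorem det_matrixCIII :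
    (matrixCIII α₁ α₂ α₄ l m).det = 2 * (leadingMinorCIII α₁ α₂ l m).det - α₄ * (4 - l * m) := by
  simp [matrixCIII, leadingMinorCIII, Matrix.det_succ_row_zero, Fin.sum_univ_succ, Fin.succAbove]
  ring

theorem kernelVectorCIII_ne_zero : kernelVectorCIII l m ≠ 0 := fun h ↦ by
  simpa [kernelVectorCIII] using congrFun h 0

theorem ker_matrixCIII_le_span [NeZero (2 : K)] (hlm : l * m ≠ 4) :
    LinearMap.ker (matrixCIII α₁ α₂ α₄ l m).mulVecLin ≤ K ∙ kernelVectorCIII l m := by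
  intro x hx
  have h₁ := congrFun hx 1
  have h₂ := congrFun hx 2
  have h₃ := congrFun hx 3
  simp only [matrixCIII, Matrix.mulVecLin_apply, Matrix.mulVec, dotProduct, Fin.sum_univ_four,
    Matrix.of_apply, Matrix.cons_val', Matrix.cons_val, Matrix.cons_val_fin_one, Pi.zero_apply]
    at h₁ h₂ h₃
  have hlm' : 4 - l * m ≠ 0 := sub_ne_zero.mpr hlm.symm
  refine Submodule.mem_span_singleton.mpr ⟨x 0, funext fun i ↦ ?_⟩
  fin_cases i
  · exact mul_one _
  · show x 0 * ((l + 2) / (4 - l * m)) = x 1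
    rw [mul_div_assoc', div_eq_iff hlm']
    linear_combination -2 * h₁ - l * h₂
  · show x 0 * ((m + 2) / (4 - l * m)) = x 2
    rw [mul_div_assoc', div_eq_iff hlm']
    linear_combination -m * h₁ - 2 * h₂
  · show x 0 * (1 / 2) = x 3
    rw [mul_one_div, div_eq_iff two_ne_zero]
    linear_combination -h₃

theorem ker_matrixCIII_eq_span [NeZero (2 : K)] (hdet : (matrixCIII α₁ α₂ α₄ l m).det = 0)
    (hlm : l * m ≠ 4) :
    LinearMap.ker (matrixCIII α₁ α₂ α₄ l m).mulVecLin = K ∙ kernelVectorCIII l m :=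
  Submodule.eq_span_singleton_of_le_of_ne_bot (ker_matrixCIII_le_span α₁ α₂ α₄ l m hlm)
    (Matrix.ker_mulVecLin_ne_bot_of_det_eq_zero hdet)

end CIII

/-- If det C(III) = 0, α₄ ≠ 0 and α₃ := lm ≠ 4, then the leading
3 × 3 principal minor equals (1/2)·α₄·(4 − α₃) ≠ 0, and the kernel of C(III) is
one-dimensional, spanned by (1, (l+2)/(4−α₃), (m+2)/(4−α₃), 1/2). -/
theorem stmt_14
    {K : Type*} [Field K] [CharZero K] (α₁ α₂ α₄ l m : K)
    (hdet : (!![2, -α₁, -α₂, -α₄; -1, 2, -l, 0; -1, -m, 2, 0; -1, 0, 0, 2] :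
        Matrix (Fin 4) (Fin 4) K).det = 0)
    (hα₄ : α₄ ≠ 0)
    (hα₃ : l * m ≠ 4) :
    (!![2, -α₁, -α₂; -1, 2, -l; -1, -m, 2] : Matrix (Fin 3) (Fin 3) K).det =
      (1 / 2) * α₄ * (4 - l * m) ∧
    (1 / 2 : K) * α₄ * (4 - l * m) ≠ 0 ∧
    Module.finrank K (LinearMap.ker
      (!![2, -α₁, -α₂, -α₄; -1, 2, -l, 0; -1, -m, 2, 0; -1, 0, 0, 2] :
        Matrix (Fin 4) (Fin 4) K).mulVecLin) = 1 ∧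
    LinearMap.ker
      (!![2, -α₁, -α₂, -α₄; -1, 2, -l, 0; -1, -m, 2, 0; -1, 0, 0, 2] :
        Matrix (Fin 4) (Fin 4) K).mulVecLin =
      Submodule.span K
        {![1, (l + 2) / (4 - l * m), (m + 2) / (4 - l * m), (1 : K) / 2]} := by
  have hker := ker_matrixCIII_eq_span α₁ α₂ α₄ l m hdet hα₃
  have hexpand := det_matrixCIII α₁ α₂ α₄ l m
  unfold matrixCIII leadingMinorCIII at hexpand
  refine ⟨?_, ?_, ?_, hker⟩
  · linear_combination (1 / 2 : K) * hdet - (1 / 2 : K) * hexpand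
  · exact mul_ne_zero (mul_ne_zero (by norm_num) hα₄) (sub_ne_zero.mpr hα₃.symm)
  · exact hker ▸ finrank_span_singleton (kernelVectorCIII_ne_zero l m)
end

section
/- Let K be a field of characteristic 0, let α₁, α₃, α₄, l, m ∈ K be nonzero, and set α₂ := lm. For the matrix C(IV) = [[2, −α₁, 0, −α₄], [−1, 2, −l, 0], [0, −m, 2, −1], [−1, 0, −α₃, 2]], the kernel of C(IV) has dimension 2 if and only if α₂ = α₄ = 4 − α₁, α₃ = α₁, m = −1, and l = −α₂. In that case the kernel is spanned by the vectors b₁ = (1, 1/2, 0, 1/2) and b₃ = (0, −α₂/2, 1, α₁/2). -/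
/-!
The two middle rows of `C(IV)` express `x₀` and `x₃` through `x₁` and `x₂`, so the kernel of
`C(IV)` is the image, under an injective linear map, of the kernel of a `2 × 2` matrix `S`: the
Schur complement of the block `-1` formed by the middle rows and the outer columns. Hence the
kernel is `2`-dimensional iff `S = 0`, which unwinds to the stated relations once we may divide
by `2`; in that case `b₁` and `b₃` are two independent vectors of the kernel.
-/

open Matrix Module LinearMap

theorem Matrix.finrank_ker_mulVecLin_eq_card_iff_s16 {K m n : Type*} [Field K] [Fintype m]
    [Fintype n] (A : Matrix m n K) : finrank K (ker A.mulVecLin) = Fintype.card n ↔ A = 0 := by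
  classical
  rw [← finrank_fintype_fun_eq_card (R := K), ← toLin'_apply', ← toLin'.map_eq_zero_iff,
    ← ker_eq_top]
  exact ⟨Submodule.eq_top_of_finrank_eq, fun h => by rw [h, finrank_top]⟩

namespace CartanIV

variable {K : Type*} [Field K] (α₁ α₃ α₄ l m : K)

def cartan : Matrix (Fin 4) (Fin 4) K :=
  !![2, -α₁, 0, -α₄; -1, 2, -l, 0; 0, -m, 2, -1; -1, 0, -α₃, 2]

/-- Solves rows `1` and `2` of `cartan` for `(x₀, x₃)` in terms of `(x₁, x₂)`. -/
def lift : Matrix (Fin 4) (Fin 2) K :=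
  !![2, -l; 1, 0; 0, 1; -m, 2]

/-- Rows `0` and `3` of `cartan * lift`. -/
def schur : Matrix (Fin 2) (Fin 2) K :=
  !![4 - α₁ + α₄ * m, -2 * (l + α₄); -2 * (1 + m), 4 + l - α₃]

theorem cartan_mulVec (x : Fin 4 → K) :
    cartan α₁ α₃ α₄ l m *ᵥ x =
      ![2 * x 0 - α₁ * x 1 - α₄ * x 3, -x 0 + 2 * x 1 - l * x 2, -m * x 1 + 2 * x 2 - x 3,
        -x 0 - α₃ * x 2 + 2 * x 3] := by
  ext i
  fin_cases i <;> simp [cartan, mulVec, dotProduct, Fin.sum_univ_four] <;> ring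

theorem lift_mulVec (y : Fin 2 → K) :
    lift l m *ᵥ y = ![2 * y 0 - l * y 1, y 0, y 1, -m * y 0 + 2 * y 1] := by
  ext i
  fin_cases i <;> simp [lift, mulVec, dotProduct, sub_eq_add_neg]

theorem cartan_mul_lift :
    cartan α₁ α₃ α₄ l m * lift l m =
      (!![1, 0; 0, 0; 0, 0; 0, 1] : Matrix (Fin 4) (Fin 2) K) * schur α₁ α₃ α₄ l m := by
  ext i j
  fin_cases i <;> fin_cases j <;>
    simp [cartan, lift, schur, mul_apply, Fin.sum_univ_four] <;> ring

theorem ker_lift : ker (lift l m).mulVecLin = ⊥ := by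
  refine ker_mulVecLin_eq_bot_iff.2 fun y hy => ?_
  rw [lift_mulVec] at hy
  ext i
  fin_cases i
  exacts [congrFun hy 1, congrFun hy 2]

theorem ker_cartan_le_range_lift :
    ker (cartan α₁ α₃ α₄ l m).mulVecLin ≤ range (lift l m).mulVecLin := by
  intro x hx
  rw [mem_ker, mulVecLin_apply, cartan_mulVec] at hx
  have row₁ : -x 0 + 2 * x 1 - l * x 2 = 0 := congrFun hx 1
  have row₂ : -m * x 1 + 2 * x 2 - x 3 = 0 := congrFun hx 2
  refine ⟨![x 1, x 2], ?_⟩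
  rw [mulVecLin_apply, lift_mulVec]
  ext i
  fin_cases i
  · exact (by linear_combination row₁ : 2 * x 1 - l * x 2 = x 0)
  · rfl
  · rfl
  · exact (by linear_combination row₂ : -m * x 1 + 2 * x 2 = x 3)

theorem ker_cartan_eq_map :
    ker (cartan α₁ α₃ α₄ l m).mulVecLin =
      (ker (schur α₁ α₃ α₄ l m).mulVecLin).map (lift l m).mulVecLin := by
  have hinj : ker (!![1, 0; 0, 0; 0, 0; 0, 1] : Matrix (Fin 4) (Fin 2) K).mulVecLin = ⊥ := by
    refine ker_mulVecLin_eq_bot_iff.2 fun y hy => ?_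
    have hy₀ : y 0 = 0 := by simpa [vecHead] using congrFun hy 0
    have hy₁ : y 1 = 0 := by simpa [vecHead, vecTail] using congrFun hy 3
    ext i
    fin_cases i
    exacts [hy₀, hy₁]
  rw [← ker_comp_of_ker_eq_bot _ hinj, ← mulVecLin_mul, ← cartan_mul_lift, mulVecLin_mul,
    ker_comp, Submodule.map_comap_eq, inf_eq_right.2 (ker_cartan_le_range_lift α₁ α₃ α₄ l m)]

theorem finrank_ker_cartan_eq_two_iff :
    finrank K (ker (cartan α₁ α₃ α₄ l m).mulVecLin) = 2 ↔ schur α₁ α₃ α₄ l m = 0 := by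
  rw [ker_cartan_eq_map,
    ← (Submodule.equivMapOfInjective _ (ker_eq_bot.1 (ker_lift l m)) _).finrank_eq]
  exact finrank_ker_mulVecLin_eq_card_iff_s16 _

variable [NeZero (2 : K)]

theorem schur_eq_zero_iff :
    schur α₁ α₃ α₄ l m = 0 ↔
      (l * m = 4 - α₁ ∧ α₄ = 4 - α₁ ∧ α₃ = α₁ ∧ m = -1 ∧ l = -(l * m)) := by
  simp only [schur, ← ext_iff, Fin.forall_fin_two, of_apply, cons_val', cons_val_zero,
    cons_val_one, cons_val_fin_one, Matrix.zero_apply, neg_mul, neg_eq_zero, mul_eq_zero,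
    two_ne_zero, false_or]
  constructor
  · rintro ⟨⟨h₀₀, h₀₁⟩, h₁₀, h₁₁⟩
    obtain rfl : m = -1 := by linear_combination h₁₀
    exact ⟨by linear_combination -h₀₀ - h₀₁, by linear_combination -h₀₀,
      by linear_combination -h₁₁ + h₀₀ + h₀₁, rfl, by ring⟩
  · rintro ⟨hlm, rfl, rfl, rfl, -⟩
    exact ⟨⟨by ring, by linear_combination -hlm⟩, by ring, by linear_combination -hlm⟩

theorem ker_cartan_eq_span
    (h : l * m = 4 - α₁ ∧ α₄ = 4 - α₁ ∧ α₃ = α₁ ∧ m = -1 ∧ l = -(l * m)) :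
    ker (cartan α₁ α₃ α₄ l m).mulVecLin =
      Submodule.span K {![1, 1 / 2, 0, 1 / 2], ![0, -(l * m) / 2, 1, α₁ / 2]} := by
  have hdim := (finrank_ker_cartan_eq_two_iff α₁ α₃ α₄ l m).2
    ((schur_eq_zero_iff α₁ α₃ α₄ l m).2 h)
  have hli :
      LinearIndependent K ![![1, (1 : K) / 2, 0, 1 / 2], ![0, -(l * m) / 2, 1, α₁ / 2]] := by
    refine LinearIndependent.pair_iff.2 fun s t hst => ⟨?_, ?_⟩
    · simpa using congrFun hst 0
    · simpa using congrFun hst 2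
  have hle : Submodule.span K {![1, (1 : K) / 2, 0, 1 / 2], ![0, -(l * m) / 2, 1, α₁ / 2]} ≤
      ker (cartan α₁ α₃ α₄ l m).mulVecLin := by
    obtain ⟨hlm, rfl, h₃, rfl, -⟩ := h
    subst α₃
    obtain rfl : α₁ = 4 + l := by linear_combination hlm
    rw [Submodule.span_le, Set.insert_subset_iff, Set.singleton_subset_iff]
    constructor <;>
    · rw [SetLike.mem_coe, mem_ker, mulVecLin_apply, cartan_mulVec]
      ext i
      fin_cases i <;> simp <;> field_simp <;> ring
  refine (Submodule.eq_of_le_of_finrank_eq hle ?_).symm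
  rw [hdim, ← range_cons_cons_empty _ _ ![], finrank_span_eq_card hli, Fintype.card_fin]

end CartanIV

open CartanIV in
theorem stmt_16_general
    {K : Type*} [Field K] [CharZero K] (α₁ α₃ α₄ l m : K) :
    (Module.finrank K (LinearMap.ker
        (!![2, -α₁, 0, -α₄; -1, 2, -l, 0; 0, -m, 2, -1; -1, 0, -α₃, 2] :
          Matrix (Fin 4) (Fin 4) K).mulVecLin) = 2 ↔
      (l * m = 4 - α₁ ∧ α₄ = 4 - α₁ ∧ α₃ = α₁ ∧ m = -1 ∧ l = -(l * m))) ∧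
    ((l * m = 4 - α₁ ∧ α₄ = 4 - α₁ ∧ α₃ = α₁ ∧ m = -1 ∧ l = -(l * m)) →
      LinearMap.ker
        (!![2, -α₁, 0, -α₄; -1, 2, -l, 0; 0, -m, 2, -1; -1, 0, -α₃, 2] :
          Matrix (Fin 4) (Fin 4) K).mulVecLin =
        Submodule.span K
          ({![1, (1 : K) / 2, 0, (1 : K) / 2],
            ![0, -(l * m) / 2, 1, α₁ / 2]} : Set (Fin 4 → K))) := by
  exact ⟨(finrank_ker_cartan_eq_two_iff α₁ α₃ α₄ l m).trans (schur_eq_zero_iff α₁ α₃ α₄ l m),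
    ker_cartan_eq_span α₁ α₃ α₄ l m⟩

/-- With α₂ := lm, the kernel of C(IV) has dimension 2 iff
α₂ = α₄ = 4 − α₁, α₃ = α₁, m = −1 and l = −α₂; in that case the kernel is
spanned by b₁ = (1, 1/2, 0, 1/2) and b₃ = (0, −α₂/2, 1, α₁/2). -/
theorem stmt_16
    {K : Type*} [Field K] [CharZero K] (α₁ α₃ α₄ l m : K)
    (hα₁ : α₁ ≠ 0) (hα₃ : α₃ ≠ 0) (hα₄ : α₄ ≠ 0) (hl : l ≠ 0) (hm : m ≠ 0) :
    (Module.finrank K (LinearMap.ker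
        (!![2, -α₁, 0, -α₄; -1, 2, -l, 0; 0, -m, 2, -1; -1, 0, -α₃, 2] :
          Matrix (Fin 4) (Fin 4) K).mulVecLin) = 2 ↔
      (l * m = 4 - α₁ ∧ α₄ = 4 - α₁ ∧ α₃ = α₁ ∧ m = -1 ∧ l = -(l * m))) ∧
    ((l * m = 4 - α₁ ∧ α₄ = 4 - α₁ ∧ α₃ = α₁ ∧ m = -1 ∧ l = -(l * m)) →
      LinearMap.ker
        (!![2, -α₁, 0, -α₄; -1, 2, -l, 0; 0, -m, 2, -1; -1, 0, -α₃, 2] :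
          Matrix (Fin 4) (Fin 4) K).mulVecLin =
        Submodule.span K
          ({![1, (1 : K) / 2, 0, (1 : K) / 2],
            ![0, -(l * m) / 2, 1, α₁ / 2]} : Set (Fin 4 → K))) :=
  stmt_16_general α₁ α₃ α₄ l m
end

section
/- Let K be a field of characteristic 0, α₁, α₂, α₃, l₁, m₁, l₂, m₂ ∈ K, and set α₄ := l₁m₁ and α₅ := l₂m₂. For the matrix C(V) = [[2, −α₁, −α₂, −α₃], [−1, 2, −l₁, 0], [−1, −m₁, 2, −l₂], [−1, 0, −m₂, 2]], the kernel of C(V) has dimension 2 if and only if α₁ + α₃ = 4, α₄ + α₅ = 4, α₁l₁ + α₃m₂ + 2α₂ = 0, and m₁ + l₂ + 2 = 0. In that case the kernel is spanned by the vectors b₁ = (1, 1/2, 0, 1/2) and b₃ = (0, l₁/2, 1, m₂/2). -/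
/-!
Rows 2 and 4 of `C(V)` determine the second and fourth coordinates of a kernel vector from the
first and third, so the kernel always lies in the plane spanned by `b₁` and `b₃`. It is therefore
two-dimensional exactly when it contains `b₁` and `b₃`, and the nonzero coordinates of `C(V) b₁`
and `C(V) b₃` are, up to the factor `-1/2`, the four expressions in the conditions.
-/

open Matrix

namespace MatrixC

variable {K : Type*} [Field K]

def C (α₁ α₂ α₃ l₁ m₁ l₂ m₂ : K) : Matrix (Fin 4) (Fin 4) K :=
  !![2, -α₁, -α₂, -α₃; -1, 2, -l₁, 0; -1, -m₁, 2, -l₂; -1, 0, -m₂, 2]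

def b₁ : Fin 4 → K := ![1, 1 / 2, 0, 1 / 2]

def b₃ (l₁ m₂ : K) : Fin 4 → K := ![0, l₁ / 2, 1, m₂ / 2]

theorem finrank_span_b₁_b₃ (l₁ m₂ : K) :
    Module.finrank K (Submodule.span K ({b₁, b₃ l₁ m₂} : Set (Fin 4 → K))) = 2 := by
  have hli : LinearIndependent K ![b₁, b₃ l₁ m₂] := by
    refine LinearIndependent.pair_iff.mpr fun s t h ↦ ⟨?_, ?_⟩
    · simpa [b₁, b₃] using congrFun h 0
    · simpa [b₁, b₃] using congrFun h 2
  have := finrank_span_eq_card hli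
  rwa [range_cons_cons_empty, Fintype.card_fin] at this

variable [NeZero (2 : K)] (α₁ α₂ α₃ l₁ m₁ l₂ m₂ : K)

theorem C_mulVec_b₁ :
    C α₁ α₂ α₃ l₁ m₁ l₂ m₂ *ᵥ b₁ = ![-(α₁ + α₃ - 4) / 2, 0, -(m₁ + l₂ + 2) / 2, 0] := by
  funext i
  fin_cases i <;> simp [C, b₁, mulVec, dotProduct, Fin.sum_univ_four] <;> field_simp <;> ring

theorem C_mulVec_b₃ :
    C α₁ α₂ α₃ l₁ m₁ l₂ m₂ *ᵥ b₃ l₁ m₂ =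
      ![-(α₁ * l₁ + α₃ * m₂ + 2 * α₂) / 2, 0, -(l₁ * m₁ + l₂ * m₂ - 4) / 2, 0] := by
  funext i
  fin_cases i <;> simp [C, b₃, mulVec, dotProduct, Fin.sum_univ_four] <;> field_simp <;> ring

theorem b₁_mem_ker_iff :
    b₁ ∈ LinearMap.ker (C α₁ α₂ α₃ l₁ m₁ l₂ m₂).mulVecLin ↔ α₁ + α₃ = 4 ∧ m₁ + l₂ + 2 = 0 := by
  simp only [LinearMap.mem_ker, mulVecLin_apply, C_mulVec_b₁, cons_eq_zero_iff, zero_empty,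
    div_eq_zero_iff, two_ne_zero, or_false, neg_eq_zero, sub_eq_zero, true_and, and_true]

theorem b₃_mem_ker_iff :
    b₃ l₁ m₂ ∈ LinearMap.ker (C α₁ α₂ α₃ l₁ m₁ l₂ m₂).mulVecLin ↔
      α₁ * l₁ + α₃ * m₂ + 2 * α₂ = 0 ∧ l₁ * m₁ + l₂ * m₂ = 4 := by
  simp only [LinearMap.mem_ker, mulVecLin_apply, C_mulVec_b₃, cons_eq_zero_iff, zero_empty,
    div_eq_zero_iff, two_ne_zero, or_false, neg_eq_zero, sub_eq_zero, true_and, and_true]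

theorem ker_le_span :
    LinearMap.ker (C α₁ α₂ α₃ l₁ m₁ l₂ m₂).mulVecLin ≤
      Submodule.span K ({b₁, b₃ l₁ m₂} : Set (Fin 4 → K)) := by
  intro x hx
  rw [LinearMap.mem_ker, mulVecLin_apply] at hx
  have row₂ := congrFun hx 1
  have row₄ := congrFun hx 3
  simp only [C, mulVec, dotProduct, Fin.sum_univ_four, of_apply, cons_val', cons_val_fin_one,
    cons_val_zero, cons_val_one, cons_val, neg_mul, one_mul, zero_mul, add_zero, Pi.zero_apply]
    at row₂ row₄
  have hx_eq : x = x 0 • b₁ + x 2 • b₃ l₁ m₂ := by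
    funext i
    fin_cases i <;>
      simp only [Fin.zero_eta, Fin.mk_one, Fin.reduceFinMk, b₁, b₃, smul_cons, smul_eq_mul, mul_one,
        mul_zero, smul_empty, Pi.add_apply, cons_val_zero, cons_val_one, cons_val, add_zero,
        zero_add] <;>
      field_simp
    · linear_combination row₂
    · linear_combination row₄
  rw [hx_eq]
  exact Submodule.add_mem _ (Submodule.smul_mem _ _ (Submodule.subset_span (by simp)))
    (Submodule.smul_mem _ _ (Submodule.subset_span (by simp)))

theorem ker_eq_span_iff :
    LinearMap.ker (C α₁ α₂ α₃ l₁ m₁ l₂ m₂).mulVecLin =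
        Submodule.span K ({b₁, b₃ l₁ m₂} : Set (Fin 4 → K)) ↔
      b₁ ∈ LinearMap.ker (C α₁ α₂ α₃ l₁ m₁ l₂ m₂).mulVecLin ∧
        b₃ l₁ m₂ ∈ LinearMap.ker (C α₁ α₂ α₃ l₁ m₁ l₂ m₂).mulVecLin := by
  rw [← (ker_le_span ..).ge_iff_eq, Submodule.span_le, Set.insert_subset_iff,
    Set.singleton_subset_iff, SetLike.mem_coe, SetLike.mem_coe]

theorem finrank_ker_eq_two_iff :
    Module.finrank K (LinearMap.ker (C α₁ α₂ α₃ l₁ m₁ l₂ m₂).mulVecLin) = 2 ↔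
      LinearMap.ker (C α₁ α₂ α₃ l₁ m₁ l₂ m₂).mulVecLin =
        Submodule.span K ({b₁, b₃ l₁ m₂} : Set (Fin 4 → K)) := by
  refine ⟨fun h ↦ Submodule.eq_of_le_of_finrank_eq (ker_le_span ..) ?_, fun h ↦ ?_⟩ <;>
    rw [h, finrank_span_b₁_b₃]

end MatrixC

open MatrixC in
/-- Writing α₄ := l₁m₁ and α₅ := l₂m₂, the kernel of C(V) has
dimension 2 iff α₁ + α₃ = 4, α₄ + α₅ = 4, α₁l₁ + α₃m₂ + 2α₂ = 0 and
m₁ + l₂ + 2 = 0; in that case the kernel is spanned by b₁ = (1, 1/2, 0, 1/2)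
and b₃ = (0, l₁/2, 1, m₂/2). -/
theorem stmt_18
    {K : Type*} [Field K] [CharZero K] (α₁ α₂ α₃ l₁ m₁ l₂ m₂ : K) :
    (Module.finrank K (LinearMap.ker
        (!![2, -α₁, -α₂, -α₃; -1, 2, -l₁, 0; -1, -m₁, 2, -l₂; -1, 0, -m₂, 2] :
          Matrix (Fin 4) (Fin 4) K).mulVecLin) = 2 ↔
      (α₁ + α₃ = 4 ∧ l₁ * m₁ + l₂ * m₂ = 4 ∧
        α₁ * l₁ + α₃ * m₂ + 2 * α₂ = 0 ∧ m₁ + l₂ + 2 = 0)) ∧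
    ((α₁ + α₃ = 4 ∧ l₁ * m₁ + l₂ * m₂ = 4 ∧
        α₁ * l₁ + α₃ * m₂ + 2 * α₂ = 0 ∧ m₁ + l₂ + 2 = 0) →
      LinearMap.ker
        (!![2, -α₁, -α₂, -α₃; -1, 2, -l₁, 0; -1, -m₁, 2, -l₂; -1, 0, -m₂, 2] :
          Matrix (Fin 4) (Fin 4) K).mulVecLin =
        Submodule.span K
          ({![1, (1 : K) / 2, 0, (1 : K) / 2],
            ![0, l₁ / 2, 1, m₂ / 2]} : Set (Fin 4 → K))) := by
  have hconditions : (α₁ + α₃ = 4 ∧ l₁ * m₁ + l₂ * m₂ = 4 ∧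
      α₁ * l₁ + α₃ * m₂ + 2 * α₂ = 0 ∧ m₁ + l₂ + 2 = 0) ↔
      LinearMap.ker (C α₁ α₂ α₃ l₁ m₁ l₂ m₂).mulVecLin =
        Submodule.span K ({b₁, b₃ l₁ m₂} : Set (Fin 4 → K)) := by
    rw [ker_eq_span_iff, b₁_mem_ker_iff, b₃_mem_ker_iff]
    tauto
  exact ⟨(finrank_ker_eq_two_iff ..).trans hconditions.symm, hconditions.mp⟩
end
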